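/- arXiv:2307.07769 — 5 statements merged into one kernel-verified Lean document; each statement's English description precedes it below -/
import Mathlib

section
/- Let p > 1, ξ > 1, d > 0, and define φ(t) = d^{1-ξ} - (d + max(t,0))^{1-ξ} for t ∈ ℝ. Then for all real x, y, φ(x) - φ(y) = (ξ-1)(x₊ - y₊) ∫₀¹ (d + t·y₊ + (1-t)·x₊)^{-ξ} dt, where x₊ = max(x,0); consequently |x - y|^{p-2}(x - y)(φ(x) - φ(y)) ≥ (ξ-1) |x - y|^{p-2} (x₊ - y₊)² (d + |x| + |y|)^{-ξ}. -/
open intervalIntegral Real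

/-- The identity for the test function `φ(t) = d^{1-ξ} - (d + t₊)^{1-ξ}` and the resulting
lower bound for `|x-y|^{p-2}(x-y)(φ(x)-φ(y))`. -/
theorem test_function_identity_and_bound
    (p ξ d x y : ℝ) (hp : 1 < p) (hξ : 1 < ξ) (hd : 0 < d) :
    ((d ^ (1 - ξ) - (d + max x 0) ^ (1 - ξ)) - (d ^ (1 - ξ) - (d + max y 0) ^ (1 - ξ)))
        = (ξ - 1) * (max x 0 - max y 0) *
            ∫ t in (0 : ℝ)..1, (d + t * max y 0 + (1 - t) * max x 0) ^ (-ξ) ∧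
      (ξ - 1) * |x - y| ^ (p - 2) * (max x 0 - max y 0) ^ 2 * (d + |x| + |y|) ^ (-ξ)
        ≤ |x - y| ^ (p - 2) * (x - y) *
          ((d ^ (1 - ξ) - (d + max x 0) ^ (1 - ξ)) -
            (d ^ (1 - ξ) - (d + max y 0) ^ (1 - ξ))) := by
  set a := max x 0 with ha
  set b := max y 0 with hb
  have ha0 : 0 ≤ a := le_max_right _ _
  have hb0 : 0 ≤ b := le_max_right _ _
  have hax : a ≤ |x| := max_le (le_abs_self x) (abs_nonneg x)
  have hby : b ≤ |y| := max_le (le_abs_self y) (abs_nonneg y)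
  have hM : (0:ℝ) < d + |x| + |y| := by positivity
  -- pointwise positivity and bound of the base
  have base_pos : ∀ t ∈ Set.Icc (0:ℝ) 1, 0 < d + t * b + (1 - t) * a := by
    intro t ht
    obtain ⟨ht0, ht1⟩ := ht
    nlinarith
  have base_le : ∀ t ∈ Set.Icc (0:ℝ) 1, d + t * b + (1 - t) * a ≤ d + |x| + |y| := by
    intro t ht
    obtain ⟨ht0, ht1⟩ := ht
    nlinarith
  -- integrability of the integrand
  have hcont : ContinuousOn (fun t : ℝ => (d + t * b + (1 - t) * a) ^ (-ξ))
      (Set.Icc (0:ℝ) 1) := by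
    apply ContinuousOn.rpow_const
    · fun_prop
    · intro t ht
      exact Or.inl (ne_of_gt (base_pos t ht))
  have hint : IntervalIntegrable (fun t : ℝ => (d + t * b + (1 - t) * a) ^ (-ξ))
      MeasureTheory.volume 0 1 := by
    apply ContinuousOn.intervalIntegrable
    rwa [Set.uIcc_of_le (by norm_num : (0:ℝ) ≤ 1)]
  -- the identity
  have hid : ((d ^ (1 - ξ) - (d + a) ^ (1 - ξ)) - (d ^ (1 - ξ) - (d + b) ^ (1 - ξ)))
      = (ξ - 1) * (a - b) * ∫ t in (0:ℝ)..1, (d + t * b + (1 - t) * a) ^ (-ξ) := by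
    rcases eq_or_ne a b with hab | hab
    · rw [hab]; ring
    · have hba : b - a ≠ 0 := sub_ne_zero.mpr (Ne.symm hab)
      have hrw : (fun t : ℝ => (d + t * b + (1 - t) * a) ^ (-ξ))
          = fun t : ℝ => ((b - a) * t + (d + a)) ^ (-ξ) := by
        funext t; ring_nf
      rw [hrw, intervalIntegral.integral_comp_mul_add (fun u => u ^ (-ξ)) hba (d + a)]
      have h0 : (0:ℝ) ∉ Set.uIcc ((b - a) * 0 + (d + a)) ((b - a) * 1 + (d + a)) := by
        intro h
        have h1 : 0 < (b - a) * 0 + (d + a) := by nlinarith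
        have h2 : 0 < (b - a) * 1 + (d + a) := by nlinarith
        rcases Set.mem_uIcc.mp h with ⟨hl, _⟩ | ⟨hl, _⟩ <;> linarith
      rw [integral_rpow (Or.inr ⟨by linarith, h0⟩)]
      have h1 : (b - a) * 0 + (d + a) = d + a := by ring
      have h2 : (b - a) * 1 + (d + a) = d + b := by ring
      rw [h1, h2, smul_eq_mul]
      have hnξ : -ξ + 1 = 1 - ξ := by ring
      rw [hnξ]
      have hξ1 : (1:ℝ) - ξ ≠ 0 := sub_ne_zero.mpr (by linarith)
      field_simp [hba, hξ1]
      ring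
  refine ⟨hid, ?_⟩
  rw [hid]
  -- lower bound on the integral
  have hJ : (d + |x| + |y|) ^ (-ξ) ≤ ∫ t in (0:ℝ)..1, (d + t * b + (1 - t) * a) ^ (-ξ) := by
    have hc : (∫ _ in (0:ℝ)..1, (d + |x| + |y|) ^ (-ξ)) = (d + |x| + |y|) ^ (-ξ) := by
      simp
    rw [← hc]
    apply intervalIntegral.integral_mono_on (by norm_num) (by simp) hint
    intro t ht
    exact Real.rpow_le_rpow_of_nonpos (base_pos t ht) (base_le t ht) (by linarith)
  -- (a-b)^2 ≤ (x-y)(a-b)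
  have habs : |a - b| ≤ |x - y| := abs_max_sub_max_le_abs x y 0
  have h1 : (a - b) ^ 2 ≤ (x - y) * (a - b) := by
    rcases le_total x y with hxy | hxy
    · have hba : a ≤ b := max_le_max hxy le_rfl
      have : b - a ≤ y - x := by
        have := abs_le.mp habs
        rw [abs_of_nonpos (by linarith : x - y ≤ 0)] at habs
        rw [abs_of_nonpos (by linarith : a - b ≤ 0)] at habs
        linarith
      nlinarith
    · have hba : b ≤ a := max_le_max hxy le_rfl
      have : a - b ≤ x - y := by
        rw [abs_of_nonneg (by linarith : (0:ℝ) ≤ x - y)] at habs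
        rw [abs_of_nonneg (by linarith : (0:ℝ) ≤ a - b)] at habs
        linarith
      nlinarith
  have hxyp : (0:ℝ) ≤ |x - y| ^ (p - 2) := Real.rpow_nonneg (abs_nonneg _) _
  have hMp : (0:ℝ) ≤ (d + |x| + |y|) ^ (-ξ) := Real.rpow_nonneg hM.le _
  have key : (a - b) ^ 2 * (d + |x| + |y|) ^ (-ξ)
      ≤ (x - y) * (a - b) * ∫ t in (0:ℝ)..1, (d + t * b + (1 - t) * a) ^ (-ξ) :=
    mul_le_mul h1 hJ hMp (le_trans (sq_nonneg _) h1)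
  have c_nonneg : (0:ℝ) ≤ (ξ - 1) * |x - y| ^ (p - 2) := by
    apply mul_nonneg (by linarith) hxyp
  have := mul_le_mul_of_nonneg_left key c_nonneg
  calc (ξ - 1) * |x - y| ^ (p - 2) * (a - b) ^ 2 * (d + |x| + |y|) ^ (-ξ)
      = (ξ - 1) * |x - y| ^ (p - 2) * ((a - b) ^ 2 * (d + |x| + |y|) ^ (-ξ)) := by ring
    _ ≤ (ξ - 1) * |x - y| ^ (p - 2) *
        ((x - y) * (a - b) * ∫ t in (0:ℝ)..1, (d + t * b + (1 - t) * a) ^ (-ξ)) := this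
    _ = |x - y| ^ (p - 2) * (x - y) *
        ((ξ - 1) * (a - b) * ∫ t in (0:ℝ)..1, (d + t * b + (1 - t) * a) ^ (-ξ)) := by ring
end

section
/- For all a, b ∈ ℝ and p ≥ 2, (|a|^{p-2}a - |b|^{p-2}b)(a - b) ≥ C(p) |a - b|^p for some constant C(p) > 0 depending only on p. -/
private lemma sup_add' {x y q : ℝ} (hx : 0 ≤ x) (hy : 0 ≤ y) (hq : 1 ≤ q) :
    x ^ q + y ^ q ≤ (x + y) ^ q := by
  have := NNReal.add_rpow_le_rpow_add (⟨x, hx⟩ : NNReal) ⟨y, hy⟩ hq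
  exact_mod_cast this

private lemma mean_pow' {x y q : ℝ} (hx : 0 ≤ x) (hy : 0 ≤ y) (hq : 1 ≤ q) :
    (x + y) ^ q ≤ 2 ^ (q - 1) * (x ^ q + y ^ q) := by
  have := NNReal.rpow_add_le_mul_rpow_add_rpow (⟨x, hx⟩ : NNReal) ⟨y, hy⟩ hq
  exact_mod_cast this

private lemma phi_of_nonneg {p x : ℝ} (hp : 2 ≤ p) (hx : 0 ≤ x) :
    |x| ^ (p - 2) * x = x ^ (p - 1) := by
  rcases eq_or_lt_of_le hx with h | h
  · rw [← h]
    simp [Real.zero_rpow (by linarith : p - 1 ≠ 0)]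
  · rw [abs_of_pos h, show p - 1 = (p - 2) + 1 by ring, Real.rpow_add_one h.ne']

/-- key lemma assuming b ≤ a -/
private lemma key {p : ℝ} (hp : 2 ≤ p) {a b : ℝ} (hab : b ≤ a) :
    2 ^ (2 - p) * (a - b) ^ (p - 1) ≤ |a| ^ (p - 2) * a - |b| ^ (p - 2) * b := by
  have hq : (1 : ℝ) ≤ p - 1 := by linarith
  have hC1 : (2:ℝ) ^ (2 - p) ≤ 1 := by
    apply Real.rpow_le_one_of_one_le_of_nonpos (by norm_num) (by linarith)
  have hmono : ∀ x y : ℝ, 0 ≤ y → y ≤ x →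
      2 ^ (2 - p) * (x - y) ^ (p - 1) ≤ x ^ (p - 1) - y ^ (p - 1) := by
    intro x y hy hyx
    have h1 : (x - y) ^ (p - 1) + y ^ (p - 1) ≤ x ^ (p - 1) := by
      have := sup_add' (by linarith : (0:ℝ) ≤ x - y) hy hq
      rwa [sub_add_cancel] at this
    have h2 : 2 ^ (2 - p) * (x - y) ^ (p - 1) ≤ (x - y) ^ (p - 1) := by
      nth_rewrite 2 [← one_mul ((x - y) ^ (p - 1))]
      exact mul_le_mul_of_nonneg_right hC1 (Real.rpow_nonneg (by linarith) _)
    linarith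
  rcases le_or_gt 0 b with hb | hb
  · rw [phi_of_nonneg hp hb, phi_of_nonneg hp (le_trans hb hab)]
    exact hmono a b hb hab
  rcases le_or_gt a 0 with ha | ha
  · have e1 : |a| ^ (p - 2) * a = -((-a) ^ (p - 1)) := by
      rw [← phi_of_nonneg hp (by linarith : (0:ℝ) ≤ -a), abs_neg]; ring
    have e2 : |b| ^ (p - 2) * b = -((-b) ^ (p - 1)) := by
      rw [← phi_of_nonneg hp (by linarith : (0:ℝ) ≤ -b), abs_neg]; ring
    rw [e1, e2]
    have := hmono (-b) (-a) (by linarith) (by linarith)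
    have hrw : -b - -a = a - b := by ring
    rw [hrw] at this
    linarith
  · -- b < 0 < a
    have e1 : |a| ^ (p - 2) * a = a ^ (p - 1) := phi_of_nonneg hp ha.le
    have e2 : |b| ^ (p - 2) * b = -((-b) ^ (p - 1)) := by
      rw [← phi_of_nonneg hp (by linarith : (0:ℝ) ≤ -b), abs_neg]; ring
    rw [e1, e2, sub_neg_eq_add]
    have h := mean_pow' ha.le (by linarith : (0:ℝ) ≤ -b) hq
    have hrw : a + -b = a - b := by ring
    rw [hrw] at h
    have hCpos : (0:ℝ) < 2 ^ (2 - p) := Real.rpow_pos_of_pos (by norm_num) _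
    have h2 : 2 ^ (2 - p) * (a - b) ^ (p - 1) ≤
        2 ^ (2 - p) * (2 ^ (p - 1 - 1) * (a ^ (p - 1) + (-b) ^ (p - 1))) :=
      mul_le_mul_of_nonneg_left h hCpos.le
    have h3 : (2:ℝ) ^ (2 - p) * 2 ^ (p - 1 - 1) = 1 := by
      rw [← Real.rpow_add (by norm_num), show 2 - p + (p - 1 - 1) = 0 by ring, Real.rpow_zero]
    calc 2 ^ (2 - p) * (a - b) ^ (p - 1) ≤ _ := h2
      _ = a ^ (p - 1) + (-b) ^ (p - 1) := by rw [← mul_assoc, h3, one_mul]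

/-- Monotonicity inequality for the `p`-Laplace nonlinearity, `p ≥ 2`:
`(|a|^{p-2}a - |b|^{p-2}b)(a-b) ≥ C(p)|a-b|^p`. -/
theorem p_laplace_monotone_ge_two
    (p : ℝ) (hp : 2 ≤ p) :
    ∃ C : ℝ, 0 < C ∧ ∀ a b : ℝ,
      C * |a - b| ^ p ≤ (|a| ^ (p - 2) * a - |b| ^ (p - 2) * b) * (a - b) := by
  refine ⟨2 ^ (2 - p), Real.rpow_pos_of_pos (by norm_num) _, ?_⟩
  have main : ∀ a b : ℝ, b ≤ a →
      2 ^ (2 - p) * |a - b| ^ p ≤ (|a| ^ (p - 2) * a - |b| ^ (p - 2) * b) * (a - b) := by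
    intro a b hab
    have hd : 0 ≤ a - b := by linarith
    rw [abs_of_nonneg hd]
    rcases eq_or_lt_of_le hd with h | h
    · rw [← h]
      simp [Real.zero_rpow (show p ≠ 0 by linarith)]
    · rw [show p = (p - 1) + 1 by ring, Real.rpow_add_one h.ne', ← mul_assoc]
      exact mul_le_mul_of_nonneg_right (by simpa using key hp hab) hd
  intro a b
  rcases le_total b a with hab | hab
  · exact main a b hab
  · have := main b a hab
    have e : (|b| ^ (p - 2) * b - |a| ^ (p - 2) * a) * (b - a)
        = (|a| ^ (p - 2) * a - |b| ^ (p - 2) * b) * (a - b) := by ring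
    rwa [abs_sub_comm b a, e] at this
end

section
/- For all (a, b) ∈ ℝ² \ {(0,0)} and 1 < p < 2, (|a|^{p-2}a - |b|^{p-2}b)(a - b) ≥ C(p) |a - b|² (|a| + |b|)^{p-2} for some constant C(p) > 0 depending only on p. -/
open Real

private lemma rpow_subadd {q : ℝ} (hq : 0 ≤ q) (hq1 : q ≤ 1) {x y : ℝ}
    (hx : 0 ≤ x) (hy : 0 ≤ y) : (x + y) ^ q ≤ x ^ q + y ^ q := by
  have h := NNReal.rpow_add_le_add_rpow x.toNNReal y.toNNReal hq hq1
  have := NNReal.coe_le_coe.mpr h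
  simpa [← Real.toNNReal_add hx hy, Real.coe_toNNReal _ (by positivity : (0:ℝ) ≤ x + y),
    Real.coe_toNNReal _ hx, Real.coe_toNNReal _ hy, NNReal.coe_rpow,
    Real.rpow_natCast] using this

/-- tangent-line / Bernoulli step for `0 ≤ b ≤ a`, `a > 0`. -/
private lemma keyA {p : ℝ} (hp1 : 1 < p) (hp2 : p < 2) {a b : ℝ}
    (hb : 0 ≤ b) (hba : b ≤ a) (ha : 0 < a) :
    (p - 1) * (a - b) ^ (2:ℕ) * (a + b) ^ (p - 2)
      ≤ (a ^ (p - 2) * a - b ^ (p - 2) * b) * (a - b) := by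
  have hane : a ≠ 0 := ha.ne'
  have hφa : a ^ (p - 2) * a = a ^ (p - 1) := by
    rw [← Real.rpow_add_one hane]; ring_nf
  have hφb : b ^ (p - 2) * b = b ^ (p - 1) := by
    rcases eq_or_lt_of_le hb with h | h
    · simp [← h, Real.zero_rpow (by linarith : p - 1 ≠ 0)]
    · rw [← Real.rpow_add_one h.ne']; ring_nf
  rw [hφa, hφb]
  -- suffices the degree-one inequality
  have key : (p - 1) * (a - b) * (a + b) ^ (p - 2) ≤ a ^ (p - 1) - b ^ (p - 1) := by
    have h1 : (a + b) ^ (p - 2) ≤ a ^ (p - 2) :=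
      Real.rpow_le_rpow_of_nonpos ha (by linarith) (by linarith)
    have h2 : (p - 1) * (a - b) * (a + b) ^ (p - 2) ≤ (p - 1) * (a - b) * a ^ (p - 2) := by
      apply mul_le_mul_of_nonneg_left h1
      nlinarith
    refine h2.trans ?_
    -- Bernoulli: (1 + s)^(p-1) ≤ 1 + (p-1) s with s = b/a - 1
    have hs : (-1:ℝ) ≤ b / a - 1 := by
      have : 0 ≤ b / a := div_nonneg hb ha.le
      linarith
    have hB := rpow_one_add_le_one_add_mul_self hs (by linarith : (0:ℝ) ≤ p - 1)
      (by linarith : p - 1 ≤ 1)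
    have hba' : (1:ℝ) + (b / a - 1) = b / a := by ring
    rw [hba'] at hB
    have hdiv : (b / a) ^ (p - 1) = b ^ (p - 1) / a ^ (p - 1) :=
      Real.div_rpow hb ha.le _
    have hap : 0 < a ^ (p - 1) := Real.rpow_pos_of_pos ha _
    have hB2 : b ^ (p - 1) ≤ (1 + (p - 1) * (b / a - 1)) * a ^ (p - 1) := by
      rw [hdiv] at hB
      calc b ^ (p - 1) = b ^ (p - 1) / a ^ (p - 1) * a ^ (p - 1) := by
            field_simp
        _ ≤ (1 + (p - 1) * (b / a - 1)) * a ^ (p - 1) :=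
            mul_le_mul_of_nonneg_right hB hap.le
    have heq : (1 + (p - 1) * (b / a - 1)) * a ^ (p - 1)
        = a ^ (p - 1) - (p - 1) * (a - b) * a ^ (p - 2) := by
      rw [← hφa]; field_simp; ring
    rw [heq] at hB2
    linarith
  have hab : 0 ≤ a - b := by linarith
  calc (p - 1) * (a - b) ^ (2:ℕ) * (a + b) ^ (p - 2)
      = ((p - 1) * (a - b) * (a + b) ^ (p - 2)) * (a - b) := by ring
    _ ≤ (a ^ (p - 1) - b ^ (p - 1)) * (a - b) :=
        mul_le_mul_of_nonneg_right key hab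

/-- opposite-sign case: `a ≥ 0`, `c > 0` (with `b = -c`). -/
private lemma keyB {p : ℝ} (hp1 : 1 < p) (hp2 : p < 2) {a c : ℝ}
    (ha : 0 ≤ a) (hc : 0 < c) :
    (p - 1) * (a + c) ^ (2:ℕ) * (a + c) ^ (p - 2)
      ≤ (a ^ (p - 2) * a + c ^ (p - 2) * c) * (a + c) := by
  set s := a + c with hs
  have hspos : 0 < s := by positivity
  have hφa : a ^ (p - 2) * a = a ^ (p - 1) := by
    rcases eq_or_lt_of_le ha with h | h
    · simp [← h, Real.zero_rpow (by linarith : p - 1 ≠ 0)]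
    · rw [← Real.rpow_add_one h.ne']; ring_nf
  have hφc : c ^ (p - 2) * c = c ^ (p - 1) := by
    rw [← Real.rpow_add_one hc.ne']; ring_nf
  rw [hφa, hφc]
  have hsq : s ^ (2:ℕ) * s ^ (p - 2) = s ^ (p - 1) * s := by
    rw [← Real.rpow_natCast s 2, ← Real.rpow_add hspos, ← Real.rpow_add_one hspos.ne']
    norm_num
  have hsub : s ^ (p - 1) ≤ a ^ (p - 1) + c ^ (p - 1) :=
    rpow_subadd (by linarith) (by linarith) ha hc.le
  have hsp : 0 < s ^ (p - 1) := Real.rpow_pos_of_pos hspos _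
  have key : (p - 1) * s ^ (p - 1) ≤ a ^ (p - 1) + c ^ (p - 1) := by
    nlinarith
  calc (p - 1) * s ^ (2:ℕ) * s ^ (p - 2)
      = (p - 1) * s ^ (p - 1) * s := by rw [mul_assoc, hsq, mul_assoc]
    _ ≤ (a ^ (p - 1) + c ^ (p - 1)) * s := mul_le_mul_of_nonneg_right key hspos.le

private lemma keyHalf {p : ℝ} (hp1 : 1 < p) (hp2 : p < 2) {a b : ℝ}
    (hba : b ≤ a) (hab : (a, b) ≠ (0, 0)) :
    (p - 1) * |a - b| ^ (2 : ℕ) * (|a| + |b|) ^ (p - 2)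
      ≤ (|a| ^ (p - 2) * a - |b| ^ (p - 2) * b) * (a - b) := by
  rcases le_or_gt 0 b with hb | hb
  · -- 0 ≤ b ≤ a
    have ha : 0 < a := by
      rcases eq_or_lt_of_le (hb.trans hba) with h | h
      · exact absurd (by simp [← h, le_antisymm (h ▸ hba) hb]) hab
      · exact h
    rw [abs_of_nonneg hb, abs_of_nonneg ha.le, abs_of_nonneg (by linarith : (0:ℝ) ≤ a - b)]
    exact keyA hp1 hp2 hb hba ha
  · rcases le_or_gt 0 a with ha | ha
    · -- a ≥ 0 > b
      have := keyB hp1 hp2 ha (by linarith : 0 < -b)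
      rw [abs_of_nonneg ha, abs_of_neg hb, abs_of_nonneg (by linarith : (0:ℝ) ≤ a - b)]
      have e1 : a - b = a + -b := by ring
      have e2 : (a ^ (p - 2) * a + (-b) ^ (p - 2) * -b) * (a + -b)
          = (a ^ (p - 2) * a - (-b) ^ (p - 2) * b) * (a - b) := by ring
      rw [e1]
      calc (p - 1) * (a + -b) ^ (2:ℕ) * (a + -b) ^ (p - 2)
          ≤ (a ^ (p - 2) * a + (-b) ^ (p - 2) * -b) * (a + -b) := this
        _ = (a ^ (p - 2) * a - (-b) ^ (p - 2) * b) * (a + -b) := by rw [e2, e1]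
    · -- b ≤ a < 0 : negate, use keyA on (-b, -a)
      have h := keyA hp1 hp2 (by linarith : (0:ℝ) ≤ -a) (by linarith : -a ≤ -b)
        (by linarith : (0:ℝ) < -b)
      rw [abs_of_neg ha, abs_of_neg hb, abs_of_nonneg (by linarith : (0:ℝ) ≤ a - b)]
      have e1 : -b - -a = a - b := by ring
      have e2 : -b + -a = -a + -b := by ring
      rw [e1, e2] at h
      have e3 : ((-b) ^ (p - 2) * -b - (-a) ^ (p - 2) * -a) * (a - b)
          = ((-a) ^ (p - 2) * a - (-b) ^ (p - 2) * b) * (a - b) := by ring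
      rw [e3] at h
      exact h

/-- Monotonicity inequality for the `p`-Laplace nonlinearity, `1 < p < 2`:
`(|a|^{p-2}a - |b|^{p-2}b)(a-b) ≥ C(p)|a-b|²(|a|+|b|)^{p-2}` off the origin. -/
theorem p_laplace_monotone_lt_two
    (p : ℝ) (hp1 : 1 < p) (hp2 : p < 2) :
    ∃ C : ℝ, 0 < C ∧ ∀ a b : ℝ, (a, b) ≠ (0, 0) →
      C * |a - b| ^ (2 : ℕ) * (|a| + |b|) ^ (p - 2)
        ≤ (|a| ^ (p - 2) * a - |b| ^ (p - 2) * b) * (a - b) := by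
  refine ⟨p - 1, by linarith, fun a b hab => ?_⟩
  rcases le_total b a with h | h
  · exact keyHalf hp1 hp2 h hab
  · have hab' : (b, a) ≠ (0, 0) := by
      simp only [ne_eq, Prod.mk.injEq, not_and] at hab ⊢
      intro hb0 ha0; subst hb0 ha0
      exact hab rfl rfl
    have := keyHalf hp1 hp2 h hab'
    have e1 : (|b| ^ (p - 2) * b - |a| ^ (p - 2) * a) * (b - a)
        = (|a| ^ (p - 2) * a - |b| ^ (p - 2) * b) * (a - b) := by ring
    rw [e1, abs_sub_comm b a, add_comm |b| |a|] at this
    exact this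
end

section
/- Let κ > p - 1 > 0 and suppose u, w : Ω → [0, ∞] are measurable with μ := u^κ dx + ρ dτ ≤ w^κ dx + ρ dτ =: ν as measures, where w = A·C·W^{2diam(Ω)}_{s,p}[ρτ]. If W^{2diam(Ω)}_{s,p}[(W^{2diam(Ω)}_{s,p}[τ])^κ dx] ≤ M W^{2diam(Ω)}_{s,p}[τ] a.e. in Ω and A = 2^{1/(p-1)+1}, then for ρ > 0 small enough that (AC)^{κ/(p-1)} M ρ^{(κ-p+1)/(p-1)²} + 1 < 2, one has C·W^{2diam(Ω)}_{s,p}[ν] ≤ w a.e. in Ω. -/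
open MeasureTheory

/-- The truncated Wolff potential. -/
noncomputable def wolff (N : ℕ) (s p R : ℝ) (μ : Measure (EuclideanSpace ℝ (Fin N)))
    (x : EuclideanSpace ℝ (Fin N)) : ℝ :=
  ∫ r in Set.Ioo (0 : ℝ) R,
    ((μ (Metric.ball x r)).toReal / r ^ ((N : ℝ) - s * p)) ^ (1 / (p - 1)) / r

/-- The integrand of the Wolff potential. -/
noncomputable def wig (N : ℕ) (s p : ℝ) (μ : Measure (EuclideanSpace ℝ (Fin N)))
    (x : EuclideanSpace ℝ (Fin N)) (r : ℝ) : ℝ :=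
  ((μ (Metric.ball x r)).toReal / r ^ ((N : ℝ) - s * p)) ^ (1 / (p - 1)) / r

lemma wolff_eq_wig (N : ℕ) (s p R : ℝ) (μ : Measure (EuclideanSpace ℝ (Fin N)))
    (x : EuclideanSpace ℝ (Fin N)) :
    wolff N s p R μ x = ∫ r in Set.Ioo (0 : ℝ) R, wig N s p μ x r := rfl

lemma wig_nonneg (N : ℕ) (s p : ℝ) (μ : Measure (EuclideanSpace ℝ (Fin N)))
    (x : EuclideanSpace ℝ (Fin N)) {r : ℝ} (hr : 0 < r) : 0 ≤ wig N s p μ x r :=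
  div_nonneg (Real.rpow_nonneg
    (div_nonneg ENNReal.toReal_nonneg (Real.rpow_nonneg hr.le _)) _) hr.le

lemma wig_measurable (N : ℕ) (s p : ℝ) (μ : Measure (EuclideanSpace ℝ (Fin N)))
    (x : EuclideanSpace ℝ (Fin N)) : Measurable (wig N s p μ x) := by
  have hmono : Monotone fun r : ℝ => μ (Metric.ball x r) :=
    fun a b hab => measure_mono (Metric.ball_subset_ball hab)
  have h1 : Measurable fun r : ℝ => (μ (Metric.ball x r)).toReal :=
    ENNReal.measurable_toReal.comp hmono.measurable
  unfold wig
  fun_prop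

lemma wolff_nonneg (N : ℕ) (s p R : ℝ) (μ : Measure (EuclideanSpace ℝ (Fin N)))
    (x : EuclideanSpace ℝ (Fin N)) : 0 ≤ wolff N s p R μ x :=
  setIntegral_nonneg measurableSet_Ioo (fun _ hr => wig_nonneg N s p μ x hr.1)

lemma wolff_eq_toReal (N : ℕ) (s p R : ℝ) (μ : Measure (EuclideanSpace ℝ (Fin N)))
    (x : EuclideanSpace ℝ (Fin N)) :
    wolff N s p R μ x
      = (∫⁻ r in Set.Ioo (0 : ℝ) R, ENNReal.ofReal (wig N s p μ x r)).toReal := by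
  rw [wolff_eq_wig]
  exact integral_eq_lintegral_of_nonneg_ae
    ((ae_restrict_iff' measurableSet_Ioo).2
      (Filter.Eventually.of_forall fun r hr => wig_nonneg N s p μ x hr.1))
    (wig_measurable N s p μ x).aestronglyMeasurable

lemma wig_smul (N : ℕ) (s p : ℝ) (μ : Measure (EuclideanSpace ℝ (Fin N)))
    (x : EuclideanSpace ℝ (Fin N)) {c r : ℝ} (hc : 0 ≤ c) (hr : 0 < r) :
    wig N s p ((ENNReal.ofReal c) • μ) x r = c ^ (1 / (p - 1)) * wig N s p μ x r := by
  unfold wig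
  rw [Measure.smul_apply, smul_eq_mul, ENNReal.toReal_mul, ENNReal.toReal_ofReal hc,
    mul_div_assoc,
    Real.mul_rpow hc (div_nonneg ENNReal.toReal_nonneg (Real.rpow_nonneg hr.le _)),
    mul_div_assoc]

lemma wolff_smul (N : ℕ) (s p R : ℝ) (μ : Measure (EuclideanSpace ℝ (Fin N)))
    (x : EuclideanSpace ℝ (Fin N)) {c : ℝ} (hc : 0 ≤ c) :
    wolff N s p R ((ENNReal.ofReal c) • μ) x = c ^ (1 / (p - 1)) * wolff N s p R μ x := by
  rw [wolff_eq_wig, wolff_eq_wig,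
    setIntegral_congr_fun measurableSet_Ioo
      (fun r hr => wig_smul N s p μ x hc hr.1)]
  simpa using integral_smul (c ^ (1 / (p - 1))) (wig N s p μ x)

/-- The key pointwise bound on the Wolff integrand. -/
lemma wig_le_aux (N : ℕ) (s p : ℝ) (μ : Measure (EuclideanSpace ℝ (Fin N)))
    (x : EuclideanSpace ℝ (Fin N)) {r : ℝ} (hr : 0 < r) (he : 0 ≤ 1 / (p - 1)) (t : ℝ)
    (h : (μ (Metric.ball x r)).toReal ≤ t) :
    wig N s p μ x r ≤ (t / r ^ ((N : ℝ) - s * p)) ^ (1 / (p - 1)) / r := by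
  have hrα : 0 < r ^ ((N : ℝ) - s * p) := Real.rpow_pos_of_pos hr _
  unfold wig
  apply div_le_div_of_nonneg_right ?_ hr.le
  exact Real.rpow_le_rpow (div_nonneg ENNReal.toReal_nonneg hrα.le)
    (div_le_div_of_nonneg_right h hrα.le) he

/-- Elementary: `(a+b)^q ≤ 2^q (a^q + b^q)` for nonnegative reals and `q ≥ 0`. -/
lemma add_rpow_le (a b q : ℝ) (ha : 0 ≤ a) (hb : 0 ≤ b) (hq : 0 ≤ q) :
    (a + b) ^ q ≤ 2 ^ q * (a ^ q + b ^ q) := by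
  have h2 : (0:ℝ) ≤ 2 ^ q := Real.rpow_nonneg (by norm_num) q
  rcases le_total a b with h | h
  · calc (a + b) ^ q ≤ (2 * b) ^ q :=
          Real.rpow_le_rpow (by linarith) (by linarith) hq
      _ = 2 ^ q * b ^ q := Real.mul_rpow (by norm_num) hb
      _ ≤ 2 ^ q * (a ^ q + b ^ q) := by
          nlinarith [Real.rpow_nonneg ha q]
  · calc (a + b) ^ q ≤ (2 * a) ^ q :=
          Real.rpow_le_rpow (by linarith) (by linarith) hq
      _ = 2 ^ q * a ^ q := Real.mul_rpow (by norm_num) ha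
      _ ≤ 2 ^ q * (a ^ q + b ^ q) := by
          nlinarith [Real.rpow_nonneg hb q]

/-- Key fixed-point estimate: if `W[(W[τ])^κ dx] ≤ M W[τ]` a.e. in `Ω`, `A = 2^{1/(p-1)+1}`
and `ρ` is small, then `C·W[ν] ≤ w` a.e. in `Ω`, where `w = A C W[ρτ]` and
`ν = w^κ dx + ρτ`. -/
theorem wolff_fixed_point_estimate
    (N : ℕ) (s p κ C M A ρ : ℝ) (hs : s ∈ Set.Ioo (0 : ℝ) 1) (hp1 : 1 < p)
    (hpN : p < (N : ℝ) / s) (hκ : p - 1 < κ) (hC : 0 < C) (hM : 0 < M) (hρ : 0 < ρ)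
    (Ω : Set (EuclideanSpace ℝ (Fin N))) (hΩo : IsOpen Ω) (hΩb : Bornology.IsBounded Ω)
    (τ : Measure (EuclideanSpace ℝ (Fin N))) [IsFiniteMeasure τ]
    (u : EuclideanSpace ℝ (Fin N) → ℝ) (hu : Measurable u) (hu0 : ∀ z, 0 ≤ u z)
    (hA : A = 2 ^ (1 / (p - 1) + 1))
    (hMcond : ∀ᵐ x ∂(volume.restrict Ω),
      wolff N s p (2 * Metric.diam Ω)
          (volume.withDensity fun y =>
            ENNReal.ofReal ((wolff N s p (2 * Metric.diam Ω) τ y) ^ κ)) x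
        ≤ M * wolff N s p (2 * Metric.diam Ω) τ x)
    (hsmall : (A * C) ^ (κ / (p - 1)) * M * ρ ^ ((κ - p + 1) / (p - 1) ^ (2 : ℕ)) + 1 < 2)
    (hle : volume.withDensity (fun x => ENNReal.ofReal (u x ^ κ))
          + (ENNReal.ofReal ρ) • τ
        ≤ volume.withDensity (fun x =>
            ENNReal.ofReal ((A * C *
              wolff N s p (2 * Metric.diam Ω) ((ENNReal.ofReal ρ) • τ) x) ^ κ))
          + (ENNReal.ofReal ρ) • τ) :
    ∀ᵐ x ∂(volume.restrict Ω),
      C * wolff N s p (2 * Metric.diam Ω)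
          (volume.withDensity (fun y =>
            ENNReal.ofReal ((A * C *
              wolff N s p (2 * Metric.diam Ω) ((ENNReal.ofReal ρ) • τ) y) ^ κ))
            + (ENNReal.ofReal ρ) • τ) x
        ≤ A * C * wolff N s p (2 * Metric.diam Ω) ((ENNReal.ofReal ρ) • τ) x := by
  clear hle hu hu0
  obtain ⟨hs0, hs1⟩ := hs
  set R := 2 * Metric.diam Ω with hRdef
  set q := 1 / (p - 1) with hq
  have hp0 : (0:ℝ) < p - 1 := by linarith
  have hq0 : 0 < q := by rw [hq]; positivity
  have hqe : (1:ℝ) / (p - 1) = q := hq.symm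
  have hqne : (1:ℝ) / (p - 1) ≠ 0 := by rw [hqe]; exact hq0.ne'
  have hpq : (p - 1) * q = 1 := by rw [hq]; field_simp
  have hα : 0 < (N : ℝ) - s * p := by
    have h := (lt_div_iff₀ hs0).1 hpN
    nlinarith
  have hA0 : 0 < A := by rw [hA]; positivity
  set μ2 := (ENNReal.ofReal ρ) • τ with hμ2
  set lam := volume.withDensity (fun y =>
    ENNReal.ofReal ((wolff N s p R τ y) ^ κ)) with hlam
  set c0 := (A * C * ρ ^ q) ^ κ with hc0
  have hρq : (0:ℝ) < ρ ^ q := Real.rpow_pos_of_pos hρ q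
  have hc0pos : 0 < c0 := by rw [hc0]; positivity
  have hc0q : (0:ℝ) < c0 ^ q := Real.rpow_pos_of_pos hc0pos q
  have hwsmul : ∀ y, wolff N s p R μ2 y = ρ ^ q * wolff N s p R τ y := by
    intro y
    rw [hμ2, wolff_smul N s p R τ y hρ.le, hqe]
  have hμ1 : (volume.withDensity fun y =>
      ENNReal.ofReal ((A * C * wolff N s p R μ2 y) ^ κ)) = (ENNReal.ofReal c0) • lam := by
    have hfun : (fun y => ENNReal.ofReal ((A * C * wolff N s p R μ2 y) ^ κ))
        = fun y => ENNReal.ofReal c0 * ENNReal.ofReal ((wolff N s p R τ y) ^ κ) := by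
      funext y
      rw [hwsmul y, show A * C * (ρ ^ q * wolff N s p R τ y)
          = (A * C * ρ ^ q) * wolff N s p R τ y by ring,
        Real.mul_rpow (by positivity) (wolff_nonneg N s p R τ y),
        ENNReal.ofReal_mul (le_of_lt hc0pos), hc0]
    rw [hfun, hlam]
    ext t ht
    rw [withDensity_apply _ ht, Measure.smul_apply, smul_eq_mul, withDensity_apply _ ht,
      lintegral_const_mul' _ _ ENNReal.ofReal_ne_top]
  rw [hμ1]
  set μ1 := (ENNReal.ofReal c0) • lam with hμ1d
  filter_upwards [hMcond] with x hMx
  set ν := μ1 + μ2 with hν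
  have hμ2fin : ∀ B : Set (EuclideanSpace ℝ (Fin N)), μ2 B ≠ ⊤ := by
    intro B
    rw [hμ2, Measure.smul_apply, smul_eq_mul]
    exact ENNReal.mul_ne_top ENNReal.ofReal_ne_top (measure_ne_top τ B)
  have hνB : ∀ B : Set (EuclideanSpace ℝ (Fin N)), ν B = μ1 B + μ2 B := fun B => rfl
  have hrhs0 : 0 ≤ A * C * wolff N s p R μ2 x :=
    mul_nonneg (mul_nonneg hA0.le hC.le) (wolff_nonneg N s p R μ2 x)
  -- zero integrand at radii where ν is infinite
  have hwig_top : ∀ (μ : Measure (EuclideanSpace ℝ (Fin N))) (r : ℝ),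
      μ (Metric.ball x r) = ⊤ → wig N s p μ x r = 0 := by
    intro μ r h
    unfold wig
    rw [h, ENNReal.toReal_top, zero_div, Real.zero_rpow hqne, zero_div]
  by_cases hall : ∀ r ∈ Set.Ioo (0:ℝ) R, ν (Metric.ball x r) = ⊤
  · have hz : wolff N s p R ν x = 0 := by
      rw [wolff_eq_wig,
        setIntegral_congr_fun measurableSet_Ioo
          (fun r hr => hwig_top ν r (hall r hr))]
      simp
    rw [hz, mul_zero]
    exact hrhs0
  push_neg at hall
  obtain ⟨r2, hr2, hfin2⟩ := hall
  set Lν := ∫⁻ r in Set.Ioo (0:ℝ) R, ENNReal.ofReal (wig N s p ν x r) with hLν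
  set L1 := ∫⁻ r in Set.Ioo (0:ℝ) R, ENNReal.ofReal (wig N s p μ1 x r) with hL1
  set L2 := ∫⁻ r in Set.Ioo (0:ℝ) R, ENNReal.ofReal (wig N s p μ2 x r) with hL2
  set Ll := ∫⁻ r in Set.Ioo (0:ℝ) R, ENNReal.ofReal (wig N s p lam x r) with hLl
  set Lt := ∫⁻ r in Set.Ioo (0:ℝ) R, ENNReal.ofReal (wig N s p τ x r) with hLt
  by_cases hLνtop : Lν = ⊤
  · rw [wolff_eq_toReal, ← hLν, hLνtop, ENNReal.toReal_top, mul_zero]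
    exact hrhs0
  -- scaling identities for the lintegrals
  have hL1eq : L1 = ENNReal.ofReal (c0 ^ q) * Ll := by
    rw [hL1, setLIntegral_congr_fun measurableSet_Ioo
        (fun r hr => by
          rw [hμ1d, wig_smul N s p lam x hc0pos.le hr.1, hqe,
            ENNReal.ofReal_mul hc0q.le]),
      lintegral_const_mul' _ _ ENNReal.ofReal_ne_top, hLl]
  have hL2eq : L2 = ENNReal.ofReal (ρ ^ q) * Lt := by
    rw [hL2, setLIntegral_congr_fun measurableSet_Ioo
        (fun r hr => by
          rw [hμ2, wig_smul N s p τ x hρ.le hr.1, hqe,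
            ENNReal.ofReal_mul hρq.le]),
      lintegral_const_mul' _ _ ENNReal.ofReal_ne_top, hLt]
  -- μ1 part is dominated by ν
  have hcomp1 : ∀ r ∈ Set.Ioo (0:ℝ) R,
      ENNReal.ofReal (wig N s p μ1 x r) ≤ ENNReal.ofReal (wig N s p ν x r) := by
    intro r hr
    by_cases h1 : μ1 (Metric.ball x r) = ⊤
    · have hν1 : ν (Metric.ball x r) = ⊤ := by
        rw [hνB, h1]; simp
      rw [hwig_top μ1 r h1, hwig_top ν r hν1]
    · have hνfin : ν (Metric.ball x r) ≠ ⊤ := by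
        rw [hνB]
        exact ENNReal.add_ne_top.2 ⟨h1, hμ2fin _⟩
      apply ENNReal.ofReal_le_ofReal
      exact wig_le_aux N s p μ1 x hr.1 (le_of_lt (hqe ▸ hq0)) _
        (ENNReal.toReal_mono hνfin (by rw [hνB]; exact le_self_add))
  have hL1le : L1 ≤ Lν := setLIntegral_mono' measurableSet_Ioo hcomp1
  have hL1fin : L1 ≠ ⊤ := fun h => hLνtop (top_le_iff.1 (h ▸ hL1le))
  have hLlfin : Ll ≠ ⊤ := by
    intro h
    apply hL1fin
    rw [hL1eq, h, ENNReal.mul_top]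
    simp only [ne_eq, ENNReal.ofReal_eq_zero, not_le]
    exact hc0q
  -- μ2 part has finite lintegral
  have hr20 : 0 < r2 := hr2.1
  have hL2fin : L2 ≠ ⊤ := by
    set T : ℝ := (μ2 Set.univ).toReal with hT
    set K : ENNReal :=
      ENNReal.ofReal ((T / r2 ^ ((N : ℝ) - s * p)) ^ (1 / (p - 1)) / r2) with hK
    have hsplit : L2 ≤ (∫⁻ r in Set.Ioo (0:ℝ) r2, ENNReal.ofReal (wig N s p μ2 x r))
        + (∫⁻ r in Set.Ico r2 R, ENNReal.ofReal (wig N s p μ2 x r)) := by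
      refine le_trans (lintegral_mono_set ?_) (lintegral_union_le _ _ _)
      intro y hy
      rcases lt_or_ge y r2 with h | h
      · exact Or.inl ⟨hy.1, h⟩
      · exact Or.inr ⟨h, hy.2⟩
    have hb1 : (∫⁻ r in Set.Ioo (0:ℝ) r2, ENNReal.ofReal (wig N s p μ2 x r)) ≤ Lν := by
      refine le_trans (setLIntegral_mono' measurableSet_Ioo ?_)
        (lintegral_mono_set (fun y hy => ⟨hy.1, hy.2.trans hr2.2⟩))
      intro r hr
      have hνfin : ν (Metric.ball x r) ≠ ⊤ :=
        fun h => hfin2 (top_le_iff.1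
          (h ▸ measure_mono (Metric.ball_subset_ball hr.2.le)))
      apply ENNReal.ofReal_le_ofReal
      exact wig_le_aux N s p μ2 x hr.1 (le_of_lt (hqe ▸ hq0)) _
        (ENNReal.toReal_mono hνfin (by rw [hνB]; exact le_add_self))
    have hb2 : (∫⁻ r in Set.Ico r2 R, ENNReal.ofReal (wig N s p μ2 x r))
        ≤ K * volume (Set.Ico r2 R) := by
      rw [← setLIntegral_const]
      apply setLIntegral_mono' measurableSet_Ico
      intro r hr
      have hr0 : 0 < r := lt_of_lt_of_le hr20 hr.1
      rw [hK]
      apply ENNReal.ofReal_le_ofReal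
      have hstep : (μ2 (Metric.ball x r)).toReal / r ^ ((N : ℝ) - s * p)
          ≤ T / r2 ^ ((N : ℝ) - s * p) := by
        have hT0 : (0:ℝ) ≤ T := ENNReal.toReal_nonneg
        exact div_le_div₀ hT0
          (ENNReal.toReal_mono (hμ2fin _) (measure_mono (Set.subset_univ _)))
          (Real.rpow_pos_of_pos hr20 _)
          (Real.rpow_le_rpow hr20.le hr.1 hα.le)
      calc wig N s p μ2 x r
          ≤ ((T / r2 ^ ((N : ℝ) - s * p)) ^ (1 / (p - 1))) / r := by
            unfold wig
            apply div_le_div_of_nonneg_right ?_ hr0.le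
            exact Real.rpow_le_rpow
              (div_nonneg ENNReal.toReal_nonneg (Real.rpow_nonneg hr0.le _)) hstep
              (le_of_lt (hqe ▸ hq0))
        _ ≤ ((T / r2 ^ ((N : ℝ) - s * p)) ^ (1 / (p - 1))) / r2 := by
            have hT0 : (0:ℝ) ≤ T := ENNReal.toReal_nonneg
            exact div_le_div₀ (Real.rpow_nonneg
              (div_nonneg hT0 (Real.rpow_nonneg hr20.le _)) _) (le_refl _) hr20 hr.1
    have hKfin : K * volume (Set.Ico r2 R) ≠ ⊤ :=
      ENNReal.mul_ne_top ENNReal.ofReal_ne_top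
        (by rw [Real.volume_Ico]; exact ENNReal.ofReal_ne_top)
    exact fun h => (ENNReal.add_ne_top.2
      ⟨fun h' => hLνtop (top_le_iff.1 (h' ▸ hb1)), fun h' => hKfin (top_le_iff.1 (h' ▸ hb2))⟩)
      (top_le_iff.1 (h ▸ hsplit))
  have hLtfin : Lt ≠ ⊤ := by
    intro h
    apply hL2fin
    rw [hL2eq, h, ENNReal.mul_top]
    simp only [ne_eq, ENNReal.ofReal_eq_zero, not_le]
    exact hρq
  -- subadditivity
  have h2q : (0:ℝ) < 2 ^ q := Real.rpow_pos_of_pos (by norm_num) q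
  have hsub : Lν ≤ ENNReal.ofReal (2 ^ q) * (L1 + L2) := by
    have hpt : ∀ r ∈ Set.Ioo (0:ℝ) R,
        ENNReal.ofReal (wig N s p ν x r)
          ≤ ENNReal.ofReal (2 ^ q)
            * (ENNReal.ofReal (wig N s p μ1 x r) + ENNReal.ofReal (wig N s p μ2 x r)) := by
      intro r hr
      have hr0 : 0 < r := hr.1
      have hrα : 0 < r ^ ((N : ℝ) - s * p) := Real.rpow_pos_of_pos hr0 _
      set a := (μ1 (Metric.ball x r)).toReal with ha
      set b := (μ2 (Metric.ball x r)).toReal with hb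
      have ha0 : 0 ≤ a := ENNReal.toReal_nonneg
      have hb0 : 0 ≤ b := ENNReal.toReal_nonneg
      have habs : (ν (Metric.ball x r)).toReal ≤ a + b := by
        rw [hνB]
        exact ENNReal.toReal_add_le
      have step1 : wig N s p ν x r
          ≤ ((a + b) / r ^ ((N : ℝ) - s * p)) ^ (1 / (p - 1)) / r :=
        wig_le_aux N s p ν x hr0 (le_of_lt (hqe ▸ hq0)) _ habs
      have step2 : ((a + b) / r ^ ((N : ℝ) - s * p)) ^ (1 / (p - 1)) / r
          ≤ 2 ^ q * (wig N s p μ1 x r + wig N s p μ2 x r) := by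
        have e1 : (a + b) / r ^ ((N : ℝ) - s * p)
            = a / r ^ ((N : ℝ) - s * p) + b / r ^ ((N : ℝ) - s * p) := by
          ring
        have e2 : ((a / r ^ ((N : ℝ) - s * p)) + (b / r ^ ((N : ℝ) - s * p))) ^ (1 / (p - 1))
            ≤ 2 ^ (1 / (p - 1)) * ((a / r ^ ((N : ℝ) - s * p)) ^ (1 / (p - 1))
              + (b / r ^ ((N : ℝ) - s * p)) ^ (1 / (p - 1))) :=
          add_rpow_le _ _ _ (div_nonneg ha0 hrα.le) (div_nonneg hb0 hrα.le)
            (le_of_lt (hqe ▸ hq0))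
        rw [e1]
        calc ((a / r ^ ((N : ℝ) - s * p)) + (b / r ^ ((N : ℝ) - s * p))) ^ (1 / (p - 1)) / r
            ≤ (2 ^ (1 / (p - 1)) * ((a / r ^ ((N : ℝ) - s * p)) ^ (1 / (p - 1))
              + (b / r ^ ((N : ℝ) - s * p)) ^ (1 / (p - 1)))) / r :=
              div_le_div_of_nonneg_right e2 hr0.le
          _ = 2 ^ q * (wig N s p μ1 x r + wig N s p μ2 x r) := by
              unfold wig
              rw [hqe, ← ha, ← hb]
              ring
      calc ENNReal.ofReal (wig N s p ν x r)
          ≤ ENNReal.ofReal (2 ^ q * (wig N s p μ1 x r + wig N s p μ2 x r)) :=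
            ENNReal.ofReal_le_ofReal (le_trans step1 step2)
        _ = ENNReal.ofReal (2 ^ q)
            * (ENNReal.ofReal (wig N s p μ1 x r) + ENNReal.ofReal (wig N s p μ2 x r)) := by
            rw [ENNReal.ofReal_mul h2q.le,
              ENNReal.ofReal_add (wig_nonneg N s p μ1 x hr0) (wig_nonneg N s p μ2 x hr0)]
    calc Lν ≤ ∫⁻ r in Set.Ioo (0:ℝ) R, ENNReal.ofReal (2 ^ q)
          * (ENNReal.ofReal (wig N s p μ1 x r) + ENNReal.ofReal (wig N s p μ2 x r)) :=
        setLIntegral_mono' measurableSet_Ioo hpt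
      _ = ENNReal.ofReal (2 ^ q) * (L1 + L2) := by
        rw [lintegral_const_mul' _ _ ENNReal.ofReal_ne_top,
          lintegral_add_left
            (Measurable.ennreal_ofReal (wig_measurable N s p μ1 x)) _]
  -- pass to real numbers
  have hWν : wolff N s p R ν x
      ≤ 2 ^ q * (c0 ^ q * wolff N s p R lam x + ρ ^ q * wolff N s p R τ x) := by
    have hfinsum : ENNReal.ofReal (2 ^ q) * (L1 + L2) ≠ ⊤ :=
      ENNReal.mul_ne_top ENNReal.ofReal_ne_top (ENNReal.add_ne_top.2 ⟨hL1fin, hL2fin⟩)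
    have h := ENNReal.toReal_mono hfinsum hsub
    rw [ENNReal.toReal_mul, ENNReal.toReal_ofReal h2q.le,
      ENNReal.toReal_add hL1fin hL2fin, hL1eq, hL2eq, ENNReal.toReal_mul,
      ENNReal.toReal_mul, ENNReal.toReal_ofReal hc0q.le, ENNReal.toReal_ofReal hρq.le] at h
    rw [wolff_eq_toReal, wolff_eq_toReal, wolff_eq_toReal]
    exact h
  -- the smallness condition
  have hkey : c0 ^ q * M ≤ ρ ^ q := by
    have h1 : (A * C) ^ (κ * q) * M * ρ ^ ((κ - p + 1) * (q * q)) ≤ 1 := by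
      have e1 : κ * q = κ / (p - 1) := by rw [hq]; ring
      have e2 : (κ - p + 1) * (q * q) = (κ - p + 1) / (p - 1) ^ (2 : ℕ) := by
        rw [hq, one_div, ← mul_inv, ← sq, div_eq_mul_inv]
      rw [e1, e2]
      linarith
    have e3 : c0 ^ q = (A * C) ^ (κ * q) * ρ ^ (κ * (q * q)) := by
      rw [hc0, ← Real.rpow_mul (by positivity) κ q,
        Real.mul_rpow (by positivity) hρq.le,
        ← Real.rpow_mul hρ.le q (κ * q),
        show q * (κ * q) = κ * (q * q) by ring]
    have h5 : (p - 1) * (q * q) = q := by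
      calc (p - 1) * (q * q) = ((p - 1) * q) * q := by ring
        _ = 1 * q := by rw [hpq]
        _ = q := one_mul q
    have e4 : κ * (q * q) = (κ - p + 1) * (q * q) + q := by linear_combination h5
    calc c0 ^ q * M
        = ((A * C) ^ (κ * q) * M * ρ ^ ((κ - p + 1) * (q * q))) * ρ ^ q := by
          rw [e3, e4, Real.rpow_add hρ]; ring
      _ ≤ 1 * ρ ^ q := mul_le_mul_of_nonneg_right h1 hρq.le
      _ = ρ ^ q := one_mul _
  -- conclude
  have hA2 : A = 2 ^ q * 2 := by
    rw [hA, Real.rpow_add (by norm_num) q 1, Real.rpow_one]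
  have hWτ0 : 0 ≤ wolff N s p R τ x := wolff_nonneg N s p R τ x
  rw [hwsmul x]
  calc C * wolff N s p R ν x
      ≤ C * (2 ^ q * (c0 ^ q * wolff N s p R lam x + ρ ^ q * wolff N s p R τ x)) :=
        mul_le_mul_of_nonneg_left hWν hC.le
    _ ≤ C * (2 ^ q * ((c0 ^ q * M) * wolff N s p R τ x + ρ ^ q * wolff N s p R τ x)) := by
        apply mul_le_mul_of_nonneg_left _ hC.le
        apply mul_le_mul_of_nonneg_left _ h2q.le
        apply add_le_add_left
        rw [mul_assoc]
        exact mul_le_mul_of_nonneg_left hMx hc0q.le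
    _ ≤ C * (2 ^ q * (ρ ^ q * wolff N s p R τ x + ρ ^ q * wolff N s p R τ x)) := by
        apply mul_le_mul_of_nonneg_left _ hC.le
        apply mul_le_mul_of_nonneg_left _ h2q.le
        exact add_le_add_left (mul_le_mul_of_nonneg_right hkey hWτ0) _
    _ = A * C * (ρ ^ q * wolff N s p R τ x) := by rw [hA2]; ring
end

section
/- Let g : ℝ → ℝ be continuous, nondecreasing, g(0) = 0, satisfying |g(t)| ≤ a|t|^d for |t| ≤ 1 with a > 0 and d > p - 1 > 0, and satisfying Λ_g := ∫₁^∞ s^{-q̃-1}(g(s) - g(-s)) ds < ∞ with q̃ = N(p-1)/(N-sp). Then for any measurable v on a bounded set Ω with ‖v‖*_{L^{N/(N-sp)}_w(Ω)} ≤ t (so |{|v|^{1/(p-1)} > λ}| ≤ c t^{N/(N-sp)} λ^{-N(p-1)/(N-sp)}), one has ∫_Ω (g(|v|^{1/(p-1)}) - g(-|v|^{1/(p-1)})) dx ≤ 2a ∫_Ω |v|^{κ} dx + c(p,s,N) t^{N/(N-sp)} Λ_g, where κ = d/(p-1) > 1. -/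
open MeasureTheory Set

section helpers

lemma dyadic_le {α : Type*} [MeasurableSpace α] (μ : Measure α) (S : Set α)
    (w : α → ℝ) (φ : ℝ → ℝ)
    (hφ : ∀ u r : ℝ, 0 < u → u ≤ r → φ u ≤ φ r) :
    ∫⁻ x in S ∩ {x | 1 < w x}, ENNReal.ofReal (φ (w x)) ∂μ
      ≤ ∑' k : ℕ, ENNReal.ofReal (φ ((2:ℝ) ^ (k+1))) * μ (S ∩ {x | (2:ℝ) ^ k < w x}) := by
  classical
  have hsub : S ∩ {x | 1 < w x}
      ⊆ ⋃ k : ℕ, S ∩ {x | (2:ℝ) ^ k < w x ∧ w x ≤ (2:ℝ) ^ (k+1)} := by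
    intro x hx
    have h1 : 1 < w x := hx.2
    have hex : ∃ k : ℕ, w x ≤ (2:ℝ) ^ (k+1) := by
      obtain ⟨n, hn⟩ := exists_nat_gt (w x)
      refine ⟨n, hn.le.trans ?_⟩
      have h2 : (n : ℝ) ≤ (2:ℝ) ^ n := by
        exact_mod_cast (Nat.lt_two_pow_self (n := n)).le
      refine h2.trans (pow_le_pow_right₀ one_le_two (Nat.le_succ n))
    set k := Nat.find hex with hk
    refine Set.mem_iUnion.2 ⟨k, hx.1, ?_, Nat.find_spec hex⟩
    rcases Nat.eq_zero_or_pos k with h0 | hpos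
    · simpa [h0] using h1
    · have := Nat.find_min hex (m := k - 1) (by omega)
      push_neg at this
      have h3 : (2:ℝ) ^ (k - 1 + 1) < w x := this
      rwa [Nat.sub_add_cancel hpos] at h3
  refine le_trans (lintegral_mono_set hsub) ?_
  refine le_trans (lintegral_iUnion_le _ _) (ENNReal.tsum_le_tsum fun k => ?_)
  have hstep : ∫⁻ x in S ∩ {x | (2:ℝ) ^ k < w x ∧ w x ≤ (2:ℝ) ^ (k+1)},
      ENNReal.ofReal (φ (w x)) ∂μ
      ≤ ∫⁻ _ in S ∩ {x | (2:ℝ) ^ k < w x ∧ w x ≤ (2:ℝ) ^ (k+1)},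
        ENNReal.ofReal (φ ((2:ℝ) ^ (k+1))) ∂μ := by
    refine setLIntegral_mono measurable_const fun x hx => ?_
    refine ENNReal.ofReal_le_ofReal (hφ (w x) _ ?_ hx.2.2)
    exact lt_of_le_of_lt (by positivity) hx.2.1
  refine hstep.trans ?_
  rw [setLIntegral_const]
  exact mul_le_mul_right (measure_mono (Set.inter_subset_inter_right _ fun x hx => hx.1)) _

lemma tail_piece (q' b : ℝ) (hq' : 0 < q') (hb : 1 ≤ b) (G : ℝ → ℝ) (hGm : Monotone G)
    (hint : IntegrableOn (fun r : ℝ => r ^ (-q'-1) * G r) (Set.Ioc b (2*b))) :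
    G b * (b ^ (-q') * ((1 - (2:ℝ) ^ (-q')) / q'))
      ≤ ∫ r in Set.Ioc b (2*b), r ^ (-q'-1) * G r := by
  have hb0 : (0:ℝ) < b := lt_of_lt_of_le one_pos hb
  have hcont : ContinuousOn (fun r : ℝ => r ^ (-q'-1) * G b) (Set.Icc b (2*b)) := by
    refine ContinuousOn.mul ?_ continuousOn_const
    exact ContinuousOn.rpow_const continuousOn_id fun x hx =>
      Or.inl (ne_of_gt (lt_of_lt_of_le hb0 hx.1))
  have hint2 : IntegrableOn (fun r : ℝ => r ^ (-q'-1) * G b) (Set.Ioc b (2*b)) :=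
    (hcont.integrableOn_Icc).mono_set Set.Ioc_subset_Icc_self
  have hmono : ∫ r in Set.Ioc b (2*b), r ^ (-q'-1) * G b
      ≤ ∫ r in Set.Ioc b (2*b), r ^ (-q'-1) * G r := by
    refine setIntegral_mono_on hint2 hint measurableSet_Ioc fun r hr => ?_
    exact mul_le_mul_of_nonneg_left (hGm hr.1.le)
      (Real.rpow_nonneg (le_trans hb0.le hr.1.le) _)
  refine le_trans (le_of_eq ?_) hmono
  have hval : ∫ r in Set.Ioc b (2*b), r ^ (-q'-1) = (b ^ (-q') - (2*b) ^ (-q')) / q' := by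
    rw [← intervalIntegral.integral_of_le (by linarith : b ≤ 2*b)]
    rw [integral_rpow (Or.inr ⟨by intro h; simp at h; linarith, ?_⟩)]
    · have he : -q' - 1 + 1 = -q' := by ring
      rw [he]
      rw [div_eq_div_iff (by linarith) (ne_of_gt hq')]
      ring
    · rw [Set.uIcc_of_le (by linarith : b ≤ 2*b)]
      intro h
      exact absurd h.1 (by linarith)
  rw [integral_mul_const, hval]
  have h2b : (2*b) ^ (-q') = 2 ^ (-q') * b ^ (-q') := Real.mul_rpow (by norm_num) hb0.le
  rw [h2b]
  field_simp

end helpers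

open MeasureTheory

/-- Estimate of `∫_Ω (g(|v|^{1/(p-1)}) - g(-|v|^{1/(p-1)}))` by the power part plus the
subcritical tail, for `v` with small weak `L^{N/(N-sp)}` quasinorm. -/
theorem source_nonlinearity_estimate
    (N : ℕ) (s p d a : ℝ) (hs : s ∈ Set.Ioo (0 : ℝ) 1) (hp1 : 1 < p)
    (hpN : p < (N : ℝ) / s) (hd1 : p - 1 < d)
    (hd2 : d < (N : ℝ) * (p - 1) / ((N : ℝ) - s * p)) (ha : 0 < a)
    (g : ℝ → ℝ) (hgc : Continuous g) (hgm : Monotone g) (hg0 : g 0 = 0)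
    (hgle : ∀ t : ℝ, |t| ≤ 1 → |g t| ≤ a * |t| ^ d)
    (hΛ : IntegrableOn
      (fun t : ℝ => t ^ (-((N : ℝ) * (p - 1) / ((N : ℝ) - s * p)) - 1) * (g t - g (-t)))
      (Set.Ioi 1)) :
    ∃ c : ℝ, 0 < c ∧
      ∀ Ω : Set (EuclideanSpace ℝ (Fin N)), MeasurableSet Ω → Bornology.IsBounded Ω →
      ∀ v : EuclideanSpace ℝ (Fin N) → ℝ, Measurable v →
      ∀ t : ℝ, 0 < t →
      (∀ b : ℝ, 0 < b →
        b ^ ((N : ℝ) / ((N : ℝ) - s * p)) * (volume {x ∈ Ω | b < |v x|}).toReal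
          ≤ t ^ ((N : ℝ) / ((N : ℝ) - s * p))) →
      ∫ x in Ω, (g (|v x| ^ (1 / (p - 1))) - g (-(|v x| ^ (1 / (p - 1)))))
        ≤ 2 * a * (∫ x in Ω, |v x| ^ (d / (p - 1)))
          + c * t ^ ((N : ℝ) / ((N : ℝ) - s * p)) *
            ∫ r in Set.Ioi (1 : ℝ),
              r ^ (-((N : ℝ) * (p - 1) / ((N : ℝ) - s * p)) - 1) * (g r - g (-r)) := by
  have hs0 : 0 < s := hs.1
  have hp : 0 < p - 1 := by linarith
  have hNs : 0 < (N:ℝ)/s := lt_trans (by linarith) hpN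
  have hN : 0 < (N:ℝ) := by
    rcases div_pos_iff.1 hNs with ⟨h, _⟩ | ⟨_, h2⟩
    · exact h
    · linarith
  have hsp : s * p < N := by
    have h := (lt_div_iff₀ hs0).1 hpN
    linarith [h, mul_comm p s]
  have hNsp : 0 < (N:ℝ) - s*p := by linarith
  set Q := (N:ℝ)/((N:ℝ)-s*p) with hQdef
  set qt := (N:ℝ)*(p-1)/((N:ℝ)-s*p) with hqtdef
  have hQ : 0 < Q := div_pos hN hNsp
  have hqtQ : qt = Q * (p-1) := by rw [hQdef, hqtdef, div_mul_eq_mul_div]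
  have hqt : 0 < qt := by rw [hqtQ]; positivity
  set κ := d/(p-1) with hκdef
  have hκ : 0 < κ := div_pos (by linarith) hp
  have hκQ : κ < Q := by
    rw [hκdef, hQdef, div_lt_div_iff₀ hp hNsp]
    have := (lt_div_iff₀ hNsp).1 hd2
    linarith [this]
  have h2qt : (2:ℝ) ^ (-qt) < 1 :=
    Real.rpow_lt_one_of_one_lt_of_neg one_lt_two (by linarith)
  have h2qt0 : 0 < 1 - (2:ℝ)^(-qt) := by linarith
  set c := (2:ℝ)^qt * (qt / (1 - (2:ℝ)^(-qt))) with hcdef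
  have hc : 0 < c := by
    rw [hcdef]
    positivity
  refine ⟨c, hc, ?_⟩
  intro Ω hΩm hΩb v hv t ht hb
  -- basic facts
  have hGm : Monotone (fun r : ℝ => g r - g (-r)) :=
    fun u r hur => sub_le_sub (hgm hur) (hgm (neg_le_neg hur))
  have hwnn : ∀ x, 0 ≤ |v x| ^ (1/(p-1)) := fun x => Real.rpow_nonneg (abs_nonneg _) _
  have hGnn : ∀ r : ℝ, 0 ≤ r → 0 ≤ g r - g (-r) := by
    intro r hr
    have : -r ≤ r := by linarith
    exact sub_nonneg.2 (hgm this)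
  have hwm : Measurable (fun x : EuclideanSpace ℝ (Fin N) => |v x| ^ (1/(p-1))) :=
    (Real.continuous_rpow_const (by positivity)).measurable.comp hv.abs
  have hΩfin : volume Ω < ⊤ := hΩb.measure_lt_top
  set T := ENNReal.ofReal (t ^ Q) with hTdef
  -- weak bound in ENNReal form
  have hμ : ∀ b' : ℝ, 0 < b' →
      volume (Ω ∩ {x | b' < |v x|}) ≤ T * ENNReal.ofReal (b' ^ (-Q)) := by
    intro b' hb'
    have h1 := hb b' hb'
    have hfin : volume (Ω ∩ {x | b' < |v x|}) ≠ ⊤ :=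
      (lt_of_le_of_lt (measure_mono Set.inter_subset_left) hΩfin).ne
    have hseteq : {x | x ∈ Ω ∧ b' < |v x|} = Ω ∩ {x | b' < |v x|} := rfl
    rw [hseteq] at h1
    have hbQ : 0 < b' ^ Q := Real.rpow_pos_of_pos hb' Q
    have h2 : (volume (Ω ∩ {x | b' < |v x|})).toReal ≤ t ^ Q * b' ^ (-Q) := by
      rw [Real.rpow_neg hb'.le]
      have h3 : (volume (Ω ∩ {x | b' < |v x|})).toReal * b' ^ Q ≤ t ^ Q := by
        linarith [h1, mul_comm (b' ^ Q) ((volume (Ω ∩ {x | b' < |v x|})).toReal)]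
      have := (le_div_iff₀ hbQ).2 h3
      simpa [div_eq_mul_inv] using this
    calc volume (Ω ∩ {x | b' < |v x|})
        = ENNReal.ofReal ((volume (Ω ∩ {x | b' < |v x|})).toReal) :=
          (ENNReal.ofReal_toReal hfin).symm
      _ ≤ ENNReal.ofReal (t ^ Q * b' ^ (-Q)) := ENNReal.ofReal_le_ofReal h2
      _ = T * ENNReal.ofReal (b' ^ (-Q)) :=
          ENNReal.ofReal_mul (Real.rpow_nonneg ht.le _)
  -- level sets of w
  have hwset : ∀ lam : ℝ, 0 < lam →
      Ω ∩ {x | lam < |v x| ^ (1/(p-1))} = Ω ∩ {x | lam ^ (p-1) < |v x|} := by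
    intro lam hlam
    ext x
    simp only [Set.mem_inter_iff, Set.mem_setOf_eq]
    refine and_congr_right fun _ => ?_
    have hre : (|v x| ^ (1/(p-1))) ^ (p-1) = |v x| := by
      rw [← Real.rpow_mul (abs_nonneg _), one_div_mul_cancel (ne_of_gt hp), Real.rpow_one]
    constructor
    · intro h
      rw [← hre]
      exact Real.rpow_lt_rpow hlam.le h hp
    · intro h
      exact (Real.rpow_lt_rpow_iff hlam.le (hwnn x) hp).1 (by rw [hre]; exact h)
  have hμw : ∀ k : ℕ, volume (Ω ∩ {x | (2:ℝ)^k < |v x| ^ (1/(p-1))})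
      ≤ T * ENNReal.ofReal (((2:ℝ)^k) ^ (-qt)) := by
    intro k
    have h2k : (0:ℝ) < 2^k := by positivity
    rw [hwset _ h2k]
    refine (hμ _ (Real.rpow_pos_of_pos h2k _)).trans (le_of_eq ?_)
    congr 1
    rw [← Real.rpow_natCast (2:ℝ) k, ← Real.rpow_mul two_pos.le, ← Real.rpow_mul two_pos.le,
      ← Real.rpow_mul two_pos.le, hqtQ]
    congr 1
    ring
  -- Λ facts
  have hfnn : ∀ r : ℝ, 1 < r → 0 ≤ r ^ (-qt-1) * (g r - g (-r)) := by
    intro r hr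
    have hr0 : (0:ℝ) < r := by linarith
    exact mul_nonneg (Real.rpow_nonneg hr0.le _) (hGnn r hr0.le)
  set Λ := ∫ r in Set.Ioi (1:ℝ), r ^ (-qt-1) * (g r - g (-r)) with hΛdef
  have hΛnn : 0 ≤ Λ := setIntegral_nonneg measurableSet_Ioi fun r hr => hfnn r hr
  have hΛlin : ENNReal.ofReal Λ
      = ∫⁻ r in Set.Ioi (1:ℝ), ENNReal.ofReal (r ^ (-qt-1) * (g r - g (-r))) :=
    MeasureTheory.ofReal_integral_eq_lintegral_ofReal hΛ
      ((ae_restrict_iff' measurableSet_Ioi).2 (Filter.Eventually.of_forall fun r hr => hfnn r hr))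
  have hsk : ∀ k : ℕ, Set.Ioc ((2:ℝ)^(k+1)) (2*(2:ℝ)^(k+1)) ⊆ Set.Ioi (1:ℝ) := by
    intro k r hr
    have h1 : (1:ℝ) < 2^(k+1) := one_lt_pow₀ one_lt_two (by omega)
    exact lt_trans h1 hr.1
  have hpiece : ∀ k : ℕ,
      ENNReal.ofReal (∫ r in Set.Ioc ((2:ℝ)^(k+1)) (2*(2:ℝ)^(k+1)), r ^ (-qt-1) * (g r - g (-r)))
      = ∫⁻ r in Set.Ioc ((2:ℝ)^(k+1)) (2*(2:ℝ)^(k+1)),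
          ENNReal.ofReal (r ^ (-qt-1) * (g r - g (-r))) := by
    intro k
    refine MeasureTheory.ofReal_integral_eq_lintegral_ofReal (hΛ.mono_set (hsk k)) ?_
    exact (ae_restrict_iff' measurableSet_Ioc).2
      (Filter.Eventually.of_forall fun r hr => hfnn r (hsk k hr))
  have hdisj : Pairwise (Function.onFun Disjoint
      fun k : ℕ => Set.Ioc ((2:ℝ)^(k+1)) (2*(2:ℝ)^(k+1))) := by
    have key : ∀ i j : ℕ, i < j →
        Disjoint (Set.Ioc ((2:ℝ)^(i+1)) (2*(2:ℝ)^(i+1)))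
          (Set.Ioc ((2:ℝ)^(j+1)) (2*(2:ℝ)^(j+1))) := by
      intro i j h
      rw [Set.Ioc_disjoint_Ioc]
      refine le_trans (min_le_left _ _) (le_trans ?_ (le_max_right _ _))
      have h2 : 2*(2:ℝ)^(i+1) = 2^(i+2) := by ring
      rw [h2]
      exact pow_le_pow_right₀ one_le_two (by omega)
    intro i j hij
    rcases hij.lt_or_gt with h | h
    · exact key i j h
    · exact (key j i h).symm
  have htsum1 : (∑' k : ℕ, ∫⁻ r in Set.Ioc ((2:ℝ)^(k+1)) (2*(2:ℝ)^(k+1)),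
      ENNReal.ofReal (r ^ (-qt-1) * (g r - g (-r)))) ≤ ENNReal.ofReal Λ := by
    rw [← lintegral_iUnion (fun _ => measurableSet_Ioc) hdisj, hΛlin]
    exact lintegral_mono_set (Set.iUnion_subset hsk)
  have htsum : (∑' k : ℕ, ENNReal.ofReal
      (∫ r in Set.Ioc ((2:ℝ)^(k+1)) (2*(2:ℝ)^(k+1)), r ^ (-qt-1) * (g r - g (-r))))
      ≤ ENNReal.ofReal Λ := le_of_eq_of_le (tsum_congr hpiece) htsum1
  -- per-k real estimate
  have hkey : ∀ k : ℕ, (g ((2:ℝ)^(k+1)) - g (-((2:ℝ)^(k+1)))) * ((2:ℝ)^k) ^ (-qt)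
      ≤ c * ∫ r in Set.Ioc ((2:ℝ)^(k+1)) (2*(2:ℝ)^(k+1)), r ^ (-qt-1) * (g r - g (-r)) := by
    intro k
    set b' := (2:ℝ)^(k+1) with hb'def
    have hb'1 : (1:ℝ) ≤ b' := one_le_pow₀ one_le_two
    have hb'0 : (0:ℝ) < b' := by positivity
    have htp := tail_piece qt b' hqt hb'1 (fun r => g r - g (-r)) hGm (hΛ.mono_set (hsk k))
    set Λk := ∫ r in Set.Ioc b' (2*b'), r ^ (-qt-1) * (g r - g (-r)) with hΛkdef
    have hGb := hGnn b' hb'0.le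
    -- from htp : G b' * (b'^(-qt) * ((1-2^{-qt})/qt)) ≤ Λk
    have hstep1 : (g b' - g (-b')) * b' ^ (-qt) ≤ Λk * (qt / (1 - (2:ℝ)^(-qt))) := by
      have hα : 0 < (1 - (2:ℝ)^(-qt)) / qt := by positivity
      have h4 : (g b' - g (-b')) * b' ^ (-qt) * ((1 - (2:ℝ)^(-qt)) / qt) ≤ Λk := by
        calc (g b' - g (-b')) * b' ^ (-qt) * ((1 - (2:ℝ)^(-qt)) / qt)
            = (g b' - g (-b')) * (b' ^ (-qt) * ((1 - (2:ℝ)^(-qt)) / qt)) := by ring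
          _ ≤ Λk := htp
      have h5 := (le_div_iff₀ hα).2 h4
      calc (g b' - g (-b')) * b' ^ (-qt) ≤ Λk / ((1 - (2:ℝ)^(-qt)) / qt) := h5
        _ = Λk * (qt / (1 - (2:ℝ)^(-qt))) := by
            field_simp
    have hbb : ((2:ℝ)^k) ^ (-qt) = (2:ℝ)^qt * b' ^ (-qt) := by
      have hsplit : b' ^ (-qt) = (2:ℝ)^(-qt) * ((2:ℝ)^k) ^ (-qt) := by
        rw [hb'def, pow_succ, mul_comm ((2:ℝ)^k) 2]
        exact Real.mul_rpow (by norm_num) (by positivity)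
      rw [hsplit, ← mul_assoc, ← Real.rpow_add two_pos]
      simp
    calc (g b' - g (-b')) * ((2:ℝ)^k) ^ (-qt)
        = (2:ℝ)^qt * ((g b' - g (-b')) * b' ^ (-qt)) := by rw [hbb]; ring
      _ ≤ (2:ℝ)^qt * (Λk * (qt / (1 - (2:ℝ)^(-qt)))) := by
          refine mul_le_mul_of_nonneg_left hstep1 (by positivity)
      _ = c * Λk := by rw [hcdef]; ring
  -- tail lintegral estimate
  have htail : ∫⁻ x in Ω ∩ {x | 1 < |v x| ^ (1/(p-1))},
      ENNReal.ofReal (g (|v x| ^ (1/(p-1))) - g (-(|v x| ^ (1/(p-1)))))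
      ≤ ENNReal.ofReal c * (T * ENNReal.ofReal Λ) := by
    refine le_trans (dyadic_le volume Ω _ (fun r => g r - g (-r))
      (fun u r hu hur => hGm hur)) ?_
    have hterm : ∀ k : ℕ,
        ENNReal.ofReal (g ((2:ℝ)^(k+1)) - g (-((2:ℝ)^(k+1))))
          * volume (Ω ∩ {x | (2:ℝ)^k < |v x| ^ (1/(p-1))})
        ≤ ENNReal.ofReal c * T * ENNReal.ofReal
            (∫ r in Set.Ioc ((2:ℝ)^(k+1)) (2*(2:ℝ)^(k+1)), r ^ (-qt-1) * (g r - g (-r))) := by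
      intro k
      have hGb := hGnn ((2:ℝ)^(k+1)) (by positivity)
      refine le_trans (mul_le_mul_right (hμw k) _) ?_
      calc ENNReal.ofReal (g ((2:ℝ)^(k+1)) - g (-((2:ℝ)^(k+1))))
            * (T * ENNReal.ofReal (((2:ℝ)^k) ^ (-qt)))
          = T * ENNReal.ofReal ((g ((2:ℝ)^(k+1)) - g (-((2:ℝ)^(k+1)))) * ((2:ℝ)^k) ^ (-qt)) := by
            rw [ENNReal.ofReal_mul hGb]; ring
        _ ≤ T * ENNReal.ofReal (c * ∫ r in Set.Ioc ((2:ℝ)^(k+1)) (2*(2:ℝ)^(k+1)),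
              r ^ (-qt-1) * (g r - g (-r))) :=
            mul_le_mul_right (ENNReal.ofReal_le_ofReal (hkey k)) _
        _ = ENNReal.ofReal c * T * ENNReal.ofReal
              (∫ r in Set.Ioc ((2:ℝ)^(k+1)) (2*(2:ℝ)^(k+1)), r ^ (-qt-1) * (g r - g (-r))) := by
            rw [ENNReal.ofReal_mul hc.le]; ring
    refine le_trans (ENNReal.tsum_le_tsum hterm) ?_
    rw [ENNReal.tsum_mul_left]
    calc ENNReal.ofReal c * T * ∑' k : ℕ, ENNReal.ofReal
          (∫ r in Set.Ioc ((2:ℝ)^(k+1)) (2*(2:ℝ)^(k+1)), r ^ (-qt-1) * (g r - g (-r)))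
        ≤ ENNReal.ofReal c * T * ENNReal.ofReal Λ := mul_le_mul_right htsum _
      _ = ENNReal.ofReal c * (T * ENNReal.ofReal Λ) := by ring
  -- small-values pointwise bound
  have hsmall : ∀ x, |v x| ^ (1/(p-1)) ≤ 1 →
      g (|v x| ^ (1/(p-1))) - g (-(|v x| ^ (1/(p-1)))) ≤ 2*a*|v x| ^ κ := by
    intro x hx
    set u := |v x| ^ (1/(p-1)) with hudef
    have hu0 : 0 ≤ u := hwnn x
    have h1 : |g u| ≤ a * |u| ^ d := hgle u (by rwa [abs_of_nonneg hu0])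
    have h2 : |g (-u)| ≤ a * |(-u)| ^ d := hgle (-u) (by rwa [abs_neg, abs_of_nonneg hu0])
    have habs : |u| ^ d = |v x| ^ κ := by
      rw [abs_of_nonneg hu0, hudef, ← Real.rpow_mul (abs_nonneg _), one_div_mul_eq_div, hκdef]
    calc g u - g (-u) ≤ |g u| + |g (-u)| :=
          (sub_le_sub (le_abs_self _) (neg_abs_le _)).trans_eq (by ring)
      _ ≤ a * |u| ^ d + a * |(-u)| ^ d := add_le_add h1 h2
      _ = 2*a*|v x| ^ κ := by rw [abs_neg, habs]; ring
  -- measurability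
  have hvκm : Measurable (fun x : EuclideanSpace ℝ (Fin N) => |v x| ^ κ) :=
    (Real.continuous_rpow_const hκ.le).measurable.comp hv.abs
  have hvκ_meas : Measurable (fun x : EuclideanSpace ℝ (Fin N) =>
      ENNReal.ofReal (2*a*|v x| ^ κ)) := (hvκm.const_mul (2*a)).ennreal_ofReal
  -- split of the main lintegral
  have hsplit : ∫⁻ x in Ω, ENNReal.ofReal
        (g (|v x| ^ (1/(p-1))) - g (-(|v x| ^ (1/(p-1)))))
      ≤ (∫⁻ x in Ω, ENNReal.ofReal (2*a*|v x| ^ κ))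
        + ∫⁻ x in Ω ∩ {x | 1 < |v x| ^ (1/(p-1))},
            ENNReal.ofReal (g (|v x| ^ (1/(p-1))) - g (-(|v x| ^ (1/(p-1))))) := by
    have hcover : Ω ⊆ (Ω ∩ {x | |v x| ^ (1/(p-1)) ≤ 1}) ∪ (Ω ∩ {x | 1 < |v x| ^ (1/(p-1))}) := by
      intro x hx
      rcases le_or_gt (|v x| ^ (1/(p-1))) 1 with h | h
      · exact Or.inl ⟨hx, h⟩
      · exact Or.inr ⟨hx, h⟩
    refine le_trans (lintegral_mono_set hcover) ?_
    refine le_trans (lintegral_union_le _ _ _) (add_le_add ?_ le_rfl)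
    refine le_trans (setLIntegral_mono hvκ_meas fun x hx =>
      ENNReal.ofReal_le_ofReal (hsmall x hx.2)) ?_
    exact lintegral_mono_set Set.inter_subset_left
  -- finiteness of J
  have hJ1 : ∫⁻ x in Ω ∩ {x | |v x| ≤ 1}, ENNReal.ofReal (|v x| ^ κ) ≤ volume Ω := by
    refine le_trans (setLIntegral_mono (g := fun _ => (1:ENNReal)) measurable_const
      fun x hx => ?_) ?_
    · exact ENNReal.ofReal_le_one.2 (Real.rpow_le_one (abs_nonneg _) hx.2 hκ.le)
    · rw [setLIntegral_one]
      exact measure_mono Set.inter_subset_left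
  have hρ : (0:ℝ) ≤ (2:ℝ)^(κ-Q) := by positivity
  have hρ1 : ENNReal.ofReal ((2:ℝ)^(κ-Q)) < 1 :=
    ENNReal.ofReal_lt_one.2 (Real.rpow_lt_one_of_one_lt_of_neg one_lt_two (by linarith))
  have hterm2 : ∀ k : ℕ, ((2:ℝ)^(k+1)) ^ κ * ((2:ℝ)^k) ^ (-Q)
      = (2:ℝ)^κ * ((2:ℝ)^(κ-Q))^k := by
    intro k
    rw [← Real.rpow_natCast (2:ℝ) (k+1), ← Real.rpow_natCast (2:ℝ) k,
      ← Real.rpow_natCast ((2:ℝ)^(κ-Q)) k,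
      ← Real.rpow_mul two_pos.le, ← Real.rpow_mul two_pos.le, ← Real.rpow_mul two_pos.le,
      ← Real.rpow_add two_pos, ← Real.rpow_add two_pos]
    congr 1
    push_cast
    ring
  have hJfin : (∫⁻ x in Ω, ENNReal.ofReal (|v x| ^ κ)) < ⊤ := by
    have hcover : Ω ⊆ (Ω ∩ {x | |v x| ≤ 1}) ∪ (Ω ∩ {x | 1 < |v x|}) := by
      intro x hx
      rcases le_or_gt (|v x|) 1 with h | h
      · exact Or.inl ⟨hx, h⟩
      · exact Or.inr ⟨hx, h⟩
    refine lt_of_le_of_lt (le_trans (lintegral_mono_set hcover) (lintegral_union_le _ _ _)) ?_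
    refine ENNReal.add_lt_top.2 ⟨lt_of_le_of_lt hJ1 hΩfin, ?_⟩
    refine lt_of_le_of_lt (dyadic_le volume Ω (fun x => |v x|) (fun r => r ^ κ)
      (fun u r hu hur => Real.rpow_le_rpow hu.le hur hκ.le)) ?_
    refine lt_of_le_of_lt (ENNReal.tsum_le_tsum fun k =>
      mul_le_mul_right (hμ _ (by positivity)) _) ?_
    have heq : ∀ k : ℕ, ENNReal.ofReal (((2:ℝ)^(k+1)) ^ κ)
        * (T * ENNReal.ofReal (((2:ℝ)^k) ^ (-Q)))
        = (T * ENNReal.ofReal ((2:ℝ)^κ)) * (ENNReal.ofReal ((2:ℝ)^(κ-Q)))^k := by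
      intro k
      calc ENNReal.ofReal (((2:ℝ)^(k+1)) ^ κ) * (T * ENNReal.ofReal (((2:ℝ)^k) ^ (-Q)))
          = T * ENNReal.ofReal ((((2:ℝ)^(k+1)) ^ κ) * ((2:ℝ)^k) ^ (-Q)) := by
            rw [ENNReal.ofReal_mul (by positivity : (0:ℝ) ≤ ((2:ℝ)^(k+1)) ^ κ)]; ring
        _ = (T * ENNReal.ofReal ((2:ℝ)^κ)) * (ENNReal.ofReal ((2:ℝ)^(κ-Q)))^k := by
            rw [hterm2 k, ENNReal.ofReal_mul (by positivity : (0:ℝ) ≤ (2:ℝ)^κ),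
              ENNReal.ofReal_pow hρ]
            ring
    rw [tsum_congr heq, ENNReal.tsum_mul_left, ENNReal.tsum_geometric]
    refine ENNReal.mul_lt_top (ENNReal.mul_lt_top ?_ ENNReal.ofReal_lt_top) ?_
    · rw [hTdef]; exact ENNReal.ofReal_lt_top
    · refine ENNReal.inv_lt_top.2 ?_
      exact tsub_pos_of_lt hρ1
  -- pulling out constants
  have hI1 : ∫⁻ x in Ω, ENNReal.ofReal (2*a*|v x| ^ κ)
      = ENNReal.ofReal (2*a) * ∫⁻ x in Ω, ENNReal.ofReal (|v x| ^ κ) := by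
    simp_rw [ENNReal.ofReal_mul (by positivity : (0:ℝ) ≤ 2*a)]
    exact lintegral_const_mul _ hvκm.ennreal_ofReal
  -- express both real integrals via lintegrals
  have hLHS : ∫ x in Ω, (g (|v x| ^ (1/(p-1))) - g (-(|v x| ^ (1/(p-1)))))
      = (∫⁻ x in Ω, ENNReal.ofReal
          (g (|v x| ^ (1/(p-1))) - g (-(|v x| ^ (1/(p-1)))))).toReal := by
    rw [integral_eq_lintegral_of_nonneg_ae]
    · exact Filter.Eventually.of_forall fun x => hGnn _ (hwnn x)
    · exact ((hgc.sub (hgc.comp continuous_neg)).measurable.comp hwm).aestronglyMeasurable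
  have hRHS1 : ∫ x in Ω, |v x| ^ κ = (∫⁻ x in Ω, ENNReal.ofReal (|v x| ^ κ)).toReal := by
    rw [integral_eq_lintegral_of_nonneg_ae]
    · exact Filter.Eventually.of_forall fun x => Real.rpow_nonneg (abs_nonneg _) _
    · exact hvκm.aestronglyMeasurable
  -- combine
  have hmain : ∫⁻ x in Ω, ENNReal.ofReal
        (g (|v x| ^ (1/(p-1))) - g (-(|v x| ^ (1/(p-1)))))
      ≤ ENNReal.ofReal (2*a) * (∫⁻ x in Ω, ENNReal.ofReal (|v x| ^ κ))
        + ENNReal.ofReal c * (T * ENNReal.ofReal Λ) := by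
    refine hsplit.trans (add_le_add (le_of_eq hI1) htail)
  have hfin1 : ENNReal.ofReal (2*a) * (∫⁻ x in Ω, ENNReal.ofReal (|v x| ^ κ)) ≠ ⊤ :=
    ENNReal.mul_ne_top ENNReal.ofReal_ne_top hJfin.ne
  have hfin2 : ENNReal.ofReal c * (T * ENNReal.ofReal Λ) ≠ ⊤ :=
    ENNReal.mul_ne_top ENNReal.ofReal_ne_top
      (ENNReal.mul_ne_top (by rw [hTdef]; exact ENNReal.ofReal_ne_top) ENNReal.ofReal_ne_top)
  have hfin : ENNReal.ofReal (2*a) * (∫⁻ x in Ω, ENNReal.ofReal (|v x| ^ κ))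
      + ENNReal.ofReal c * (T * ENNReal.ofReal Λ) ≠ ⊤ :=
    ENNReal.add_ne_top.2 ⟨hfin1, hfin2⟩
  rw [hLHS, hRHS1]
  refine le_trans (ENNReal.toReal_mono hfin hmain) ?_
  rw [ENNReal.toReal_add hfin1 hfin2, ENNReal.toReal_mul, ENNReal.toReal_mul,
    ENNReal.toReal_mul, ENNReal.toReal_ofReal (by positivity : (0:ℝ) ≤ 2*a),
    ENNReal.toReal_ofReal hc.le, hTdef,
    ENNReal.toReal_ofReal (Real.rpow_nonneg ht.le _), ENNReal.toReal_ofReal hΛnn]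
  exact le_of_eq (by ring)
end
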